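/- Let G be an infinite (g,o)-growing graph with maximal degree Δ < ∞, and fix i ∈ {0,…,m}, S ⊆ L_i, U = F_{i+1} ∪ S. Then for every β > 0 and every subset C ⊆ U, μ_U^−({σ : σ_z = −1 for all z ∈ C and σ_z = +1 for all z ∈ ∂_V C ∩ U}) ≤ e^{−2β(|∂₊C| − |∂₋C|)}. -/

import Mathlib

/- Common framework: Ising model with boundary conditions on (finite pieces of)
   locally finite graphs, heat-bath Glauber dynamics quantities. -/

open Finset
open scoped Classical

noncomputable section

namespace IsingGlauber

/-- The real spin value of a Boolean spin: `true ↦ +1`, `false ↦ -1`. -/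
def spin (b : Bool) : ℝ := if b then 1 else -1

variable {V : Type*}

/-- Neighbourhood finset of a vertex, from an explicit local finiteness witness. -/
def nbr (G : SimpleGraph V) (hlf : G.LocallyFinite) (x : V) : Finset V :=
  @SimpleGraph.neighborFinset V G x (hlf x)

/-- `G` is `(g,o)`-growing: every vertex `x` (say at distance `r` from `o`) has at
    least `g` more neighbours in level `r+1` than in the ball of radius `r`. -/
def IsGrowing (G : SimpleGraph V) (hlf : G.LocallyFinite) (g : ℕ) (o : V) : Prop :=
  ∀ x : V,
    ((nbr G hlf x).filter fun z => G.dist o z ≤ G.dist o x).card + g ≤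
      ((nbr G hlf x).filter fun z => G.dist o z = G.dist o x + 1).card

variable [DecidableEq V]

/-- External vertex boundary of a finite vertex set. -/
def vbd (G : SimpleGraph V) (hlf : G.LocallyFinite) (A : Finset V) : Finset V :=
  A.biUnion (fun a => nbr G hlf a) \ A

/-- Closure `A ∪ ∂_V A` of a finite vertex set. -/
def cl (G : SimpleGraph V) (hlf : G.LocallyFinite) (A : Finset V) : Finset V :=
  A ∪ vbd G hlf A

/-- Ising Hamiltonian (zero field) with boundary: `Σ_{(x,y) ∈ E(A ∪ ∂_V A)} σ_x σ_y`,
    the sum over edges with both endpoints in `A ∪ ∂_V A` (each edge counted once). -/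
def energyB (G : SimpleGraph V) (hlf : G.LocallyFinite) (A : Finset V) (σ : V → Bool) : ℝ :=
  (1 / 2) * ∑ x ∈ cl G hlf A, ∑ y ∈ (cl G hlf A).filter (fun y => G.Adj x y),
    spin (σ x) * spin (σ y)

/-- Free-boundary Ising Hamiltonian: `Σ_{(x,y) ∈ E(A)} σ_x σ_y`,
    the sum over edges with both endpoints in `A` (each edge counted once). -/
def energyF (G : SimpleGraph V) (A : Finset V) (σ : V → Bool) : ℝ :=
  (1 / 2) * ∑ x ∈ A, ∑ y ∈ A.filter (fun y => G.Adj x y), spin (σ x) * spin (σ y)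

/-- The configuration equal to `p` on `A` and to `η` off `A`. -/
def patch (A : Finset V) (η : V → Bool) (p : ∀ a ∈ A, Bool) : V → Bool :=
  fun v => if h : v ∈ A then p v h else η v

/-- Unnormalised Gibbs sum over configurations agreeing with `η` off `A`,
    with energy functional `E` (which should already include the factor `β`). -/
def wsum (E : (V → Bool) → ℝ) (A : Finset V) (η : V → Bool) (f : (V → Bool) → ℝ) : ℝ :=
  ∑ p ∈ A.pi (fun _ => (Finset.univ : Finset Bool)),
    Real.exp (E (patch A η p)) * f (patch A η p)

/-- Gibbs expectation of `f` for the measure on region `A` with boundary condition `η`. -/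
def gExp (E : (V → Bool) → ℝ) (A : Finset V) (η : V → Bool) (f : (V → Bool) → ℝ) : ℝ :=
  wsum E A η f / wsum E A η (fun _ => 1)

/-- Gibbs probability of an event. -/
def gProb (E : (V → Bool) → ℝ) (A : Finset V) (η : V → Bool) (P : (V → Bool) → Prop) : ℝ :=
  gExp E A η (fun σ => if P σ then 1 else 0)

/-- Gibbs variance of `f`. -/
def gVar (E : (V → Bool) → ℝ) (A : Finset V) (η : V → Bool) (f : (V → Bool) → ℝ) : ℝ :=
  gExp E A η (fun σ => f σ ^ 2) - gExp E A η f ^ 2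

/-- Dirichlet form of the heat-bath Glauber dynamics:
    `D(f) = Σ_{x ∈ A} μ(Var_x(f))`, where `Var_x(f)(σ)` is the variance of `f`
    under the one-site conditional Gibbs measure at `x` given `σ` elsewhere. -/
def dirich (E : (V → Bool) → ℝ) (A : Finset V) (η : V → Bool) (f : (V → Bool) → ℝ) : ℝ :=
  ∑ x ∈ A, gExp E A η (fun σ => gVar E {x} σ f)

/-- Spectral gap `c_gap(μ) = inf { D(f)/Var(f) : Var(f) ≠ 0 }`. -/
def cgap (E : (V → Bool) → ℝ) (A : Finset V) (η : V → Bool) : ℝ :=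
  sInf {r : ℝ | ∃ f : (V → Bool) → ℝ, gVar E A η f ≠ 0 ∧ r = dirich E A η f / gVar E A η f}

/-- The edge boundary of `C`, encoded as ordered pairs `(u,v)` with `u ∈ C`,
    `v ∉ C` and `u ~ v`; these pairs are in bijection with the boundary edges. -/
def obd (G : SimpleGraph V) (hlf : G.LocallyFinite) (C : Finset V) : Finset (V × V) :=
  (C ×ˢ C.biUnion (fun c => nbr G hlf c)).filter (fun p => G.Adj p.1 p.2 ∧ p.2 ∉ C)

end IsingGlauber

open IsingGlauber

/- Peierls' argument. Reversing the spins in `C` is a bijection of the configurations on `U`.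
On the event in question every edge of `∂₊C` joins a minus spin to a plus spin and every edge
of `∂₋C` joins two minus spins, so the reversal raises the energy by exactly
`2 (|∂₊C| - |∂₋C|)`. Hence the Gibbs weight of the event is at most
`exp (-2β (|∂₊C| - |∂₋C|))` times the partition function. -/

namespace IsingGlauber

variable {V : Type*}

@[simp]
lemma mem_nbr (G : SimpleGraph V) (hlf : G.LocallyFinite) (x y : V) :
    y ∈ nbr G hlf x ↔ G.Adj x y :=
  @SimpleGraph.mem_neighborFinset V G x (hlf x) y

variable [DecidableEq V]

lemma mem_obd {G : SimpleGraph V} {hlf : G.LocallyFinite} {C : Finset V} {p : V × V} :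
    p ∈ obd G hlf C ↔ p.1 ∈ C ∧ G.Adj p.1 p.2 ∧ p.2 ∉ C := by
  simp only [obd, mem_filter, mem_product, mem_biUnion, mem_nbr]
  exact ⟨fun ⟨⟨hx, _⟩, hxy, hy⟩ => ⟨hx, hxy, hy⟩, fun ⟨hx, hxy, hy⟩ => ⟨⟨hx, _, hx, hxy⟩, hxy, hy⟩⟩

lemma sum_obd_eq_sum_sum (G : SimpleGraph V) (hlf : G.LocallyFinite) {U C : Finset V}
    (hC : C ⊆ U) (F : V → V → ℝ) :
    ∑ p ∈ obd G hlf C, F p.1 p.2 =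
      ∑ x ∈ C, ∑ y ∈ (cl G hlf U \ C).filter (G.Adj x), F x y := by
  refine sum_finset_product _ _ _ fun ⟨x, y⟩ => ?_
  simp only [mem_obd, cl, vbd, mem_filter, mem_sdiff, mem_union, mem_biUnion, mem_nbr]
  constructor
  · rintro ⟨hx, hxy, hy⟩
    exact ⟨hx, ⟨(em (y ∈ U)).imp_right fun hyU => ⟨⟨x, hC hx, hxy⟩, hyU⟩, hy⟩, hxy⟩
  · rintro ⟨hx, ⟨-, hy⟩, hxy⟩
    exact ⟨hx, hxy, hy⟩

def flipOn (C : Finset V) (σ : V → Bool) : V → Bool :=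
  fun v => if v ∈ C then !σ v else σ v

lemma spin_flipOn (C : Finset V) (σ : V → Bool) (v : V) :
    spin (flipOn C σ v) = (if v ∈ C then -1 else 1) * spin (σ v) := by
  unfold flipOn
  split_ifs <;> cases σ v <;> simp [spin]

lemma sum_sum_sign_mul_eq_sub {K C : Finset V} (hC : C ⊆ K) (w : V → V → ℝ)
    (hw : ∀ x y, w x y = w y x) :
    ∑ x ∈ K, ∑ y ∈ K, ((if x ∈ C then -1 else 1) * (if y ∈ C then -1 else 1)) * w x y =
      ∑ x ∈ K, ∑ y ∈ K, w x y - 4 * ∑ x ∈ C, ∑ y ∈ K \ C, w x y := by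
  have hsplit : ∀ f : V → ℝ, ∑ x ∈ K, f x = ∑ x ∈ C, f x + ∑ x ∈ K \ C, f x :=
    fun f => by rw [← sum_sdiff hC, add_comm]
  have hCC : ∑ x ∈ C, ∑ y ∈ C, ((if x ∈ C then -1 else 1) * (if y ∈ C then -1 else 1)) * w x y =
      ∑ x ∈ C, ∑ y ∈ C, w x y :=
    sum_congr rfl fun x hx => sum_congr rfl fun y hy => by simp [hx, hy]
  have hCD : ∑ x ∈ C, ∑ y ∈ K \ C,
      ((if x ∈ C then -1 else 1) * (if y ∈ C then -1 else 1)) * w x y =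
      -∑ x ∈ C, ∑ y ∈ K \ C, w x y := by
    simp only [← sum_neg_distrib]
    exact sum_congr rfl fun x hx => sum_congr rfl fun y hy => by simp_all
  have hDC : ∑ x ∈ K \ C, ∑ y ∈ C,
      ((if x ∈ C then -1 else 1) * (if y ∈ C then -1 else 1)) * w x y =
      -∑ x ∈ C, ∑ y ∈ K \ C, w x y := by
    rw [sum_comm]
    simp only [← sum_neg_distrib]
    exact sum_congr rfl fun x hx => sum_congr rfl fun y hy => by simp_all [hw y x]
  have hDD : ∑ x ∈ K \ C, ∑ y ∈ K \ C,
      ((if x ∈ C then -1 else 1) * (if y ∈ C then -1 else 1)) * w x y =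
      ∑ x ∈ K \ C, ∑ y ∈ K \ C, w x y :=
    sum_congr rfl fun x hx => sum_congr rfl fun y hy => by simp_all
  have hsymm : ∑ x ∈ K \ C, ∑ y ∈ C, w x y = ∑ x ∈ C, ∑ y ∈ K \ C, w x y := by
    rw [sum_comm]
    exact sum_congr rfl fun x _ => sum_congr rfl fun y _ => hw y x
  simp only [hsplit, sum_add_distrib]
  rw [hCC, hCD, hDC, hDD, hsymm]
  ring

lemma energyB_flipOn (G : SimpleGraph V) (hlf : G.LocallyFinite) {U C : Finset V}
    (hC : C ⊆ cl G hlf U) (σ : V → Bool) :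
    energyB G hlf U (flipOn C σ) = energyB G hlf U σ -
      2 * ∑ x ∈ C, ∑ y ∈ (cl G hlf U \ C).filter (G.Adj x), spin (σ x) * spin (σ y) := by
  have hsign := sum_sum_sign_mul_eq_sub hC
    (fun x y => if G.Adj x y then spin (σ x) * spin (σ y) else 0)
    fun x y => by simp only [G.adj_comm x y, mul_comm]
  have hpoint : ∀ x y, (if G.Adj x y then
      (if x ∈ C then -1 else 1) * spin (σ x) * ((if y ∈ C then -1 else 1) * spin (σ y))
      else 0) = ((if x ∈ C then -1 else 1) * (if y ∈ C then -1 else 1)) *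
        (if G.Adj x y then spin (σ x) * spin (σ y) else 0) := by
    intro x y
    split_ifs <;> ring
  simp only [energyB, sum_filter, spin_flipOn, hpoint]
  linarith

lemma wsum_one_pos (E : (V → Bool) → ℝ) (A : Finset V) (η : V → Bool) :
    0 < wsum E A η (fun _ => 1) := by
  refine sum_pos (fun p _ => by simpa using Real.exp_pos _) ⟨fun _ _ => true, ?_⟩
  simp [mem_pi]

lemma sum_pi_patch_flipOn {A C : Finset V} (hC : C ⊆ A) (η : V → Bool)
    (F : (V → Bool) → ℝ) :
    ∑ p ∈ A.pi (fun _ => (univ : Finset Bool)), F (flipOn C (patch A η p)) =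
      ∑ p ∈ A.pi (fun _ => (univ : Finset Bool)), F (patch A η p) := by
  let Φ : (∀ a ∈ A, Bool) → ∀ a ∈ A, Bool := fun p a h => if a ∈ C then !p a h else p a h
  have hΦΦ : ∀ p, Φ (Φ p) = p := fun p => by
    funext a h
    by_cases ha : a ∈ C <;> simp [Φ, ha]
  have hpatch : ∀ p, patch A η (Φ p) = flipOn C (patch A η p) := fun p => by
    funext v
    by_cases hv : v ∈ A
    · by_cases hvC : v ∈ C <;> simp [patch, flipOn, Φ, hv, hvC]
    · have hvC : v ∉ C := fun h => hv (hC h)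
      simp [patch, flipOn, hv, hvC]
  refine sum_nbij' Φ Φ (by simp [mem_pi]) (by simp [mem_pi]) (fun p _ => hΦΦ p)
    (fun p _ => hΦΦ p) fun p _ => ?_
  rw [← hpatch]

lemma gProb_le_exp_of_flipOn {E : (V → Bool) → ℝ} {A C : Finset V} {η : V → Bool}
    {P : (V → Bool) → Prop} (hC : C ⊆ A) (c : ℝ)
    (hE : ∀ σ, (∀ v ∉ A, σ v = η v) → P σ → E (flipOn C σ) = E σ + c) :
    gProb E A η P ≤ Real.exp (-c) := by
  rw [gProb, gExp, div_le_iff₀ (wsum_one_pos E A η), wsum, wsum, mul_sum]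
  calc ∑ p ∈ A.pi (fun _ => univ), Real.exp (E (patch A η p)) * (if P (patch A η p) then 1 else 0)
      ≤ ∑ p ∈ A.pi (fun _ => univ), Real.exp (-c) * Real.exp (E (flipOn C (patch A η p))) := by
        refine sum_le_sum fun p _ => ?_
        split_ifs with hP
        · rw [mul_one, hE _ (fun v hv => by simp [patch, hv]) hP, ← Real.exp_add]
          exact (congrArg Real.exp (by ring)).le
        · simp only [mul_zero]
          positivity
    _ = ∑ p ∈ A.pi (fun _ => univ), Real.exp (-c) * (Real.exp (E (patch A η p)) * 1) := by
        simp only [mul_one]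
        exact sum_pi_patch_flipOn hC η fun σ => Real.exp (-c) * Real.exp (E σ)

section Region

variable {G : SimpleGraph V} {o : V} {m i : ℕ} {Bm S U : Finset V}

lemma dist_le_of_mem_region (him : i ≤ m) (hBm : ∀ v, v ∈ Bm ↔ G.dist o v ≤ m)
    (hS : ∀ v ∈ S, G.dist o v = i) (hU : U = Bm.filter (fun v => i + 1 ≤ G.dist o v) ∪ S)
    {v : V} (hv : v ∈ U) : G.dist o v ≤ m := by
  rw [hU, mem_union, mem_filter, hBm] at hv
  rcases hv with ⟨hv, -⟩ | hv
  · exact hv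
  · exact (hS v hv).trans_le him

lemma notMem_region_or_dist_eq_succ_iff (him : i ≤ m) (hBm : ∀ v, v ∈ Bm ↔ G.dist o v ≤ m)
    (hS : ∀ v ∈ S, G.dist o v = i) (hU : U = Bm.filter (fun v => i + 1 ≤ G.dist o v) ∪ S)
    {x y : V} (hx : x ∈ U) (hxy : G.Adj x y) :
    ¬(y ∈ U ∨ G.dist o y = m + 1) ↔ G.dist o y ≤ i ∧ y ∉ S := by
  have hxm := dist_le_of_mem_region him hBm hS hU hx
  have hyx : G.dist o y ≤ G.dist o x + 1 := by
    rcases hxy.diff_dist_adj (u := o) with h | h | h <;> omega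
  rw [hU, mem_union, mem_filter, hBm]
  by_cases hyS : y ∈ S
  · simp [hyS, hS y hyS]
  · simp only [hyS, or_false, not_false_eq_true, and_true]
    omega

lemma sum_obd_spin_mul_spin_eq (hlf : G.LocallyFinite) (him : i ≤ m)
    (hBm : ∀ v, v ∈ Bm ↔ G.dist o v ≤ m) (hS : ∀ v ∈ S, G.dist o v = i)
    (hU : U = Bm.filter (fun v => i + 1 ≤ G.dist o v) ∪ S) {C : Finset V} (hC : C ⊆ U)
    {σ : V → Bool} (hσ : ∀ v ∉ U, σ v = if G.dist o v ≤ i then false else true)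
    (hminus : ∀ z ∈ C, σ z = false) (hplus : ∀ z ∈ vbd G hlf C ∩ U, σ z = true) :
    ∑ p ∈ obd G hlf C, spin (σ p.1) * spin (σ p.2) =
      -((((obd G hlf C).filter (fun p => p.2 ∈ U ∨ G.dist o p.2 = m + 1)).card : ℝ) -
        (((obd G hlf C).filter (fun p => G.dist o p.2 ≤ i ∧ p.2 ∉ S)).card : ℝ)) := by
  have hrest : (obd G hlf C).filter (fun p => ¬(p.2 ∈ U ∨ G.dist o p.2 = m + 1)) =
      (obd G hlf C).filter (fun p => G.dist o p.2 ≤ i ∧ p.2 ∉ S) :=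
    filter_congr fun p hp => by
      obtain ⟨hx, hxy, -⟩ := mem_obd.mp hp
      exact notMem_region_or_dist_eq_succ_iff him hBm hS hU (hC hx) hxy
  have hplus_edge : ∀ p ∈ (obd G hlf C).filter (fun p => p.2 ∈ U ∨ G.dist o p.2 = m + 1),
      spin (σ p.1) * spin (σ p.2) = -1 := by
    intro p hp
    obtain ⟨hp, hy⟩ := mem_filter.mp hp
    obtain ⟨hx, hxy, hyC⟩ := mem_obd.mp hp
    have hσy : σ p.2 = true := by
      rcases hy with hyU | hym
      · refine hplus _ (mem_inter.mpr ⟨?_, hyU⟩)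
        simp only [vbd, mem_sdiff, mem_biUnion, mem_nbr]
        exact ⟨⟨p.1, hx, hxy⟩, hyC⟩
      · have hyU : p.2 ∉ U := fun hyU => by
          have := dist_le_of_mem_region him hBm hS hU hyU
          omega
        rw [hσ _ hyU, if_neg (by omega)]
    simp [hminus _ hx, hσy, spin]
  have hminus_edge : ∀ p ∈ (obd G hlf C).filter (fun p => G.dist o p.2 ≤ i ∧ p.2 ∉ S),
      spin (σ p.1) * spin (σ p.2) = 1 := by
    intro p hp
    have hyU : p.2 ∉ U := by
      rw [← hrest, mem_filter, not_or] at hp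
      exact hp.2.1
    obtain ⟨hp, hy, -⟩ := mem_filter.mp hp
    obtain ⟨hx, -, -⟩ := mem_obd.mp hp
    simp [hminus _ hx, hσ _ hyU, hy, spin]
  rw [← sum_filter_add_sum_filter_not _ (fun p => p.2 ∈ U ∨ G.dist o p.2 = m + 1), hrest,
    sum_congr rfl hplus_edge, sum_congr rfl hminus_edge]
  simp only [sum_const, nsmul_eq_mul]
  ring

end Region

end IsingGlauber

theorem statement5_general {V : Type*} [DecidableEq V]
    (G : SimpleGraph V) (hlf : G.LocallyFinite) (o : V) (β : ℝ)
    (m i : ℕ) (him : i ≤ m) (Bm : Finset V) (hBm : ∀ v : V, v ∈ Bm ↔ G.dist o v ≤ m)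
    (S : Finset V) (hS : ∀ v ∈ S, G.dist o v = i)
    (U : Finset V) (hU : U = Bm.filter (fun v => i + 1 ≤ G.dist o v) ∪ S)
    (C : Finset V) (hC : C ⊆ U) :
    gProb (fun σ => β * energyB G hlf U σ) U
        (fun v => if G.dist o v ≤ i then false else true)
        (fun σ => (∀ z ∈ C, σ z = false) ∧ ∀ z ∈ vbd G hlf C ∩ U, σ z = true) ≤
      Real.exp (-2 * β *
        ((((obd G hlf C).filter (fun p => p.2 ∈ U ∨ G.dist o p.2 = m + 1)).card : ℝ) -
          (((obd G hlf C).filter (fun p => G.dist o p.2 ≤ i ∧ p.2 ∉ S)).card : ℝ))) := by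
  have hCK : C ⊆ cl G hlf U := hC.trans subset_union_left
  rw [neg_mul, neg_mul]
  refine gProb_le_exp_of_flipOn hC _ fun σ hσ ⟨hminus, hplus⟩ => ?_
  rw [energyB_flipOn G hlf hCK, ← sum_obd_eq_sum_sum G hlf hC,
    sum_obd_spin_mul_spin_eq hlf him hBm hS hU hC hσ hminus hplus]
  ring

/-- Peierls estimate: with minus boundary on `B_i \ S` and plus on
`∂_V B`, the probability that `C ⊆ U` is all minus with plus spins on `∂_V C ∩ U`
is at most `e^{-2β(|∂₊C| - |∂₋C|)}`, where `∂₊C` are the boundary edges of `C` whose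
outside endpoint lies in `U ∪ ∂_V B` and `∂₋C` those whose outside endpoint lies in
`B_i \ S`. -/
theorem statement5 {V : Type*} [DecidableEq V] [Infinite V]
    (G : SimpleGraph V) (hlf : G.LocallyFinite) (hconn : G.Connected)
    (g Δ : ℕ) (hg : 1 ≤ g) (o : V)
    (hgrow : IsGrowing G hlf g o)
    (hΔ : ∀ v : V, (nbr G hlf v).card ≤ Δ)
    (β : ℝ) (hβ : 0 < β)
    (m i : ℕ) (him : i ≤ m) (Bm : Finset V) (hBm : ∀ v : V, v ∈ Bm ↔ G.dist o v ≤ m)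
    (S : Finset V) (hS : ∀ v ∈ S, G.dist o v = i)
    (U : Finset V) (hU : U = Bm.filter (fun v => i + 1 ≤ G.dist o v) ∪ S)
    (C : Finset V) (hC : C ⊆ U) :
    gProb (fun σ => β * energyB G hlf U σ) U
        (fun v => if G.dist o v ≤ i then false else true)
        (fun σ => (∀ z ∈ C, σ z = false) ∧ ∀ z ∈ vbd G hlf C ∩ U, σ z = true) ≤
      Real.exp (-2 * β *
        ((((obd G hlf C).filter (fun p => p.2 ∈ U ∨ G.dist o p.2 = m + 1)).card : ℝ) -
          (((obd G hlf C).filter (fun p => G.dist o p.2 ≤ i ∧ p.2 ∉ S)).card : ℝ))) :=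
  statement5_general G hlf o β m i him Bm hBm S hS U hU C hC
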